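/- Let X = dU ∈ ℝ^{n×p} with d > 0 and U having orthonormal columns, let X⁽¹⁾ = dU⁽¹⁾ consist of the first p₁ columns (0 < p₁ < p), write U₂ for the remaining p − p₁ columns of U, and let λ, μ > 0. With df(λ) = p₁(2d²/(d²+λ) − d⁴/(d²+λ)²) the degrees of freedom of the ridge fit on X⁽¹⁾ and df(μ) = p(2d²/(d²+μ) − d⁴/(d²+μ)²) that of the ridge fit on X, one has for every y ∈ ℝⁿ the identity RSS(β̂_λ) − RSS(β̂_μ) = (df(μ)/p)·‖U₂ᵀy‖² − (df(λ)/p₁ − df(μ)/p)·‖(U⁽¹⁾)ᵀy‖². Consequently, if df(λ)/p₁ ≥ df(μ)/p, then RSS(β̂_λ) ≥ RSS(β̂_μ) holds if and only if (df(λ)/p₁ − df(μ)/p)·‖(U⁽¹⁾)ᵀy‖² ≤ (df(μ)/p)·‖U₂ᵀy‖². -/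

import Mathlib

/-!
If `ZᵀZ = c • 1`, the ridge fit is `Z v / (c + κ)` with `v = Zᵀy`, so expanding the square gives
`RSS = ‖y‖² − (2/(c+κ) − c/(c+κ)²)‖Zᵀy‖²`. For `Z = dU` with orthonormal columns,
`‖Zᵀy‖² = d² ∑ⱼ (uⱼᵀy)²`, and this sum over all columns of `U` splits into the sums over the
first `p₁` columns and the rest. Both RSS values are therefore affine in these two sums, and the
identity is linear arithmetic.
-/

open Matrix Finset

/-- RSS of the ridge base-learner with design matrix `Z` and penalty `κ`:
`β̂_κ = (ZᵀZ + κI)⁻¹Zᵀy`, `RSS(β̂_κ) = (y − Zβ̂_κ)ᵀ(y − Zβ̂_κ)`. -/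
noncomputable def rssGroup {n p : ℕ} (Z : Matrix (Fin n) (Fin p) ℝ) (kap : ℝ)
    (y : Fin n → ℝ) : ℝ :=
  (y - Z *ᵥ (((Zᵀ * Z + kap • 1)⁻¹ * Zᵀ) *ᵥ y)) ⬝ᵥ
    (y - Z *ᵥ (((Zᵀ * Z + kap • 1)⁻¹ * Zᵀ) *ᵥ y))

theorem Fin.sum_univ_eq_sum_castLE_add_sum_filter_le {M : Type*} [AddCommMonoid M] {m n : ℕ}
    (h : m ≤ n) (f : Fin n → M) :
    ∑ j, f j = ∑ j : Fin m, f (Fin.castLE h j) +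
      ∑ j ∈ univ.filter (fun j : Fin n => m ≤ (j : ℕ)), f j := by
  have himage : univ.map (Fin.castLEEmb h) = univ.filter (fun j : Fin n => (j : ℕ) < m) := by
    ext j
    simp only [mem_map, mem_univ, true_and, mem_filter]
    exact ⟨fun ⟨i, hi⟩ => hi ▸ i.isLt, fun hj => ⟨⟨j, hj⟩, rfl⟩⟩
  rw [← sum_filter_add_sum_filter_not univ (fun j : Fin n => (j : ℕ) < m), ← himage, sum_map]
  simp only [Fin.coe_castLEEmb, not_lt]

theorem Matrix.inv_smul_one {m K : Type*} [Fintype m] [DecidableEq m] [Field K] (a : K) :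
    (a • (1 : Matrix m m K))⁻¹ = a⁻¹ • 1 := by
  rcases eq_or_ne a 0 with rfl | ha
  · simp
  · exact inv_eq_left_inv (by rw [smul_mul_smul_comm, inv_mul_cancel₀ ha, one_mul, one_smul])

theorem Matrix.transpose_mul_self_submatrix_eq_one {R m n l : Type*} [CommRing R] [Fintype m]
    [Fintype n] [DecidableEq n] [DecidableEq l] {U : Matrix m n R} (hU : Uᵀ * U = 1)
    {e : l → n} (he : Function.Injective e) :
    (U.submatrix id e)ᵀ * U.submatrix id e = 1 := by
  rw [transpose_submatrix, ← submatrix_mul _ _ _ _ _ Function.bijective_id, hU, submatrix_one _ he]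

theorem rssGroup_of_transpose_mul_self_eq_smul {n p : ℕ} {Z : Matrix (Fin n) (Fin p) ℝ} {c : ℝ}
    (hZ : Zᵀ * Z = c • 1) (κ : ℝ) (y : Fin n → ℝ) :
    rssGroup Z κ y =
      y ⬝ᵥ y - (2 / (c + κ) - c / (c + κ) ^ 2) * ((Zᵀ *ᵥ y) ⬝ᵥ (Zᵀ *ᵥ y)) := by
  set v := Zᵀ *ᵥ y
  have hfit : ((Zᵀ * Z + κ • 1)⁻¹ * Zᵀ) *ᵥ y = (c + κ)⁻¹ • v := by
    rw [hZ, ← add_smul, inv_smul_one, smul_mul, Matrix.one_mul, smul_mulVec]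
  have hcross : y ⬝ᵥ (Z *ᵥ v) = v ⬝ᵥ v := by
    rw [dotProduct_mulVec, ← mulVec_transpose]
  have hfitted : (Z *ᵥ v) ⬝ᵥ (Z *ᵥ v) = c * (v ⬝ᵥ v) := by
    rw [dotProduct_mulVec, ← mulVec_transpose, mulVec_mulVec, hZ, smul_mulVec, one_mulVec,
      smul_dotProduct, smul_eq_mul]
  rw [rssGroup, hfit, mulVec_smul]
  simp only [sub_dotProduct, dotProduct_sub, smul_dotProduct, dotProduct_smul, smul_eq_mul,
    dotProduct_comm (Z *ᵥ v) y, hcross, hfitted]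
  rw [div_eq_mul_inv, div_eq_mul_inv, ← inv_pow]
  ring

theorem rssGroup_smul_of_transpose_mul_self_eq_one {n p : ℕ} {U : Matrix (Fin n) (Fin p) ℝ}
    (hU : Uᵀ * U = 1) (d κ : ℝ) (y : Fin n → ℝ) :
    rssGroup (d • U) κ y = y ⬝ᵥ y -
      (2 * d ^ 2 / (d ^ 2 + κ) - d ^ 4 / (d ^ 2 + κ) ^ 2) * ∑ j, ((fun i => U i j) ⬝ᵥ y) ^ 2 := by
  have hX : (d • U)ᵀ * (d • U) = d ^ 2 • 1 := by
    rw [transpose_smul, Matrix.smul_mul, Matrix.mul_smul, hU, smul_smul, sq]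
  have hproj : ((d • U)ᵀ *ᵥ y) ⬝ᵥ ((d • U)ᵀ *ᵥ y) = d ^ 2 * ∑ j, ((fun i => U i j) ⬝ᵥ y) ^ 2 := by
    have hcol : Uᵀ *ᵥ y = fun j => (fun i => U i j) ⬝ᵥ y := rfl
    rw [transpose_smul, smul_mulVec, smul_dotProduct, dotProduct_smul, hcol, dotProduct, mul_sum]
    simp only [smul_eq_mul, mul_sum]
    exact sum_congr rfl fun j _ => by ring
  rw [rssGroup_of_transpose_mul_self_eq_smul hX, hproj]
  ring

theorem rss_difference_scaled_orthogonal_general {n p p₁ : ℕ} (hp1 : 0 < p₁) (hpp : p₁ < p)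
    (d : ℝ)
    (U : Matrix (Fin n) (Fin p) ℝ) (hU : Uᵀ * U = 1)
    (lam mu : ℝ)
    (X : Matrix (Fin n) (Fin p) ℝ) (hX : X = d • U)
    (X1 : Matrix (Fin n) (Fin p₁) ℝ)
    (hX1 : X1 = X.submatrix id (Fin.castLE hpp.le))
    (y : Fin n → ℝ)
    (dfl dfm : ℝ)
    (hdfl : dfl = p₁ * (2 * d ^ 2 / (d ^ 2 + lam) - d ^ 4 / (d ^ 2 + lam) ^ 2))
    (hdfm : dfm = p * (2 * d ^ 2 / (d ^ 2 + mu) - d ^ 4 / (d ^ 2 + mu) ^ 2))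
    (A B : ℝ)
    (hA : A = ∑ j : Fin p₁, ((fun i => U i (Fin.castLE hpp.le j)) ⬝ᵥ y) ^ 2)
    (hB : B = ∑ j ∈ Finset.univ.filter (fun j : Fin p => p₁ ≤ (j : ℕ)),
      ((fun i => U i j) ⬝ᵥ y) ^ 2) :
    rssGroup X1 lam y - rssGroup X mu y = (dfm / p) * B - (dfl / p₁ - dfm / p) * A ∧
      (dfm / p ≤ dfl / p₁ →
        (rssGroup X mu y ≤ rssGroup X1 lam y ↔
          (dfl / p₁ - dfm / p) * A ≤ (dfm / p) * B)) := by
  have hU1 := transpose_mul_self_submatrix_eq_one hU (Fin.castLE_injective hpp.le)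
  have hX1U : X1 = d • U.submatrix id (Fin.castLE hpp.le) := by rw [hX1, hX]; rfl
  have hAB : ∑ j, ((fun i => U i j) ⬝ᵥ y) ^ 2 = A + B := by
    rw [hA, hB, Fin.sum_univ_eq_sum_castLE_add_sum_filter_le hpp.le]
  have hdfl' : dfl / p₁ = 2 * d ^ 2 / (d ^ 2 + lam) - d ^ 4 / (d ^ 2 + lam) ^ 2 := by
    rw [hdfl, mul_div_cancel_left₀ _ (Nat.cast_pos.mpr hp1).ne']
  have hdfm' : dfm / p = 2 * d ^ 2 / (d ^ 2 + mu) - d ^ 4 / (d ^ 2 + mu) ^ 2 := by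
    rw [hdfm, mul_div_cancel_left₀ _ (Nat.cast_pos.mpr (hp1.trans hpp)).ne']
  have hdiff : rssGroup X1 lam y - rssGroup X mu y = (dfm / p) * B - (dfl / p₁ - dfm / p) * A := by
    rw [hX1U, hX, rssGroup_smul_of_transpose_mul_self_eq_one hU1,
      rssGroup_smul_of_transpose_mul_self_eq_one hU, hAB, hA, hdfl', hdfm']
    simp only [submatrix_apply, id]
    ring
  exact ⟨hdiff, fun _ => ⟨fun h => by linarith, fun h => by linarith⟩⟩

/-- For a scaled orthogonal design `X = dU` and its sub-design `X⁽¹⁾ = dU⁽¹⁾` of the first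
`p₁` columns, with penalties `λ, μ > 0` and
`df(λ) = p₁(2d²/(d²+λ) − d⁴/(d²+λ)²)`, `df(μ) = p(2d²/(d²+μ) − d⁴/(d²+μ)²)`, one has
`RSS(β̂_λ) − RSS(β̂_μ) = (df(μ)/p)·‖U₂ᵀy‖² − (df(λ)/p₁ − df(μ)/p)·‖(U⁽¹⁾)ᵀy‖²`;
consequently, if `df(λ)/p₁ ≥ df(μ)/p`, then `RSS(β̂_λ) ≥ RSS(β̂_μ)` iff
`(df(λ)/p₁ − df(μ)/p)·‖(U⁽¹⁾)ᵀy‖² ≤ (df(μ)/p)·‖U₂ᵀy‖²`. -/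
theorem rss_difference_scaled_orthogonal {n p p₁ : ℕ} (hp1 : 0 < p₁) (hpp : p₁ < p)
    (d : ℝ) (hd : 0 < d)
    (U : Matrix (Fin n) (Fin p) ℝ) (hU : Uᵀ * U = 1)
    (lam mu : ℝ) (hlam : 0 < lam) (hmu : 0 < mu)
    (X : Matrix (Fin n) (Fin p) ℝ) (hX : X = d • U)
    (X1 : Matrix (Fin n) (Fin p₁) ℝ)
    (hX1 : X1 = X.submatrix id (Fin.castLE hpp.le))
    (y : Fin n → ℝ)
    (dfl dfm : ℝ)
    (hdfl : dfl = p₁ * (2 * d ^ 2 / (d ^ 2 + lam) - d ^ 4 / (d ^ 2 + lam) ^ 2))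
    (hdfm : dfm = p * (2 * d ^ 2 / (d ^ 2 + mu) - d ^ 4 / (d ^ 2 + mu) ^ 2))
    (A B : ℝ)
    (hA : A = ∑ j : Fin p₁, ((fun i => U i (Fin.castLE hpp.le j)) ⬝ᵥ y) ^ 2)
    (hB : B = ∑ j ∈ Finset.univ.filter (fun j : Fin p => p₁ ≤ (j : ℕ)),
      ((fun i => U i j) ⬝ᵥ y) ^ 2) :
    rssGroup X1 lam y - rssGroup X mu y = (dfm / p) * B - (dfl / p₁ - dfm / p) * A ∧
      (dfm / p ≤ dfl / p₁ →
        (rssGroup X mu y ≤ rssGroup X1 lam y ↔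
          (dfl / p₁ - dfm / p) * A ≤ (dfm / p) * B)) :=
  rss_difference_scaled_orthogonal_general hp1 hpp d U hU lam mu X hX X1 hX1 y dfl dfm hdfl hdfm A B
    hA hB
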